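/- For an N×N real tridiagonal matrix A with A_{jj} = 2ε̂ⱼ, A_{j,j-1} = -ε_{j-1/2}, A_{j,j+1} = -ε_{j+1/2}, where ε_{j±1/2} > 0 and ε̂ⱼ = (ε_{j+1/2}+ε_{j-1/2})/2, augmented with first and last rows encoding Robin boundary conditions (h+2β_a ε(a), h-2β_a ε(a)) and (h-2β_b ε(b), h+2β_b ε(b)) with h, β_a, β_b, ε(a), ε(b) > 0, the resulting (N+2)×(N+2) system matrix is invertible. -/
import Mathlib
open Finset
private lemma sum2' (n a b : ℕ) (hab : a ≠ b) (ha : a < n) (hb : b < n)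
    (A B : ℝ) (g : ℕ → ℝ) :
    ∑ j ∈ Finset.range n, (if j = a then A else if j = b then B else 0) * g j
      = A * g a + B * g b := by
  have hcong : ∀ j ∈ Finset.range n,
      (if j = a then A else if j = b then B else 0) * g j
        = (if j = a then A * g a else 0) + (if j = b then B * g b else 0) := by
    intro j _
    rcases eq_or_ne j a with rfl | h1
    · rw [if_pos rfl, if_pos rfl, if_neg hab]; ring
    · rw [if_neg h1, if_neg h1]
      rcases eq_or_ne j b with rfl | h2
      · rw [if_pos rfl, if_pos rfl]; ring
      · rw [if_neg h2, if_neg h2]; ring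
  rw [Finset.sum_congr rfl hcong, Finset.sum_add_distrib,
    Finset.sum_ite_eq' (Finset.range n) a (fun _ => A * g a),
    Finset.sum_ite_eq' (Finset.range n) b (fun _ => B * g b)]
  simp [Finset.mem_range.mpr ha, Finset.mem_range.mpr hb]

private lemma sum3' (n a b c : ℕ) (hab : a ≠ b) (hac : a ≠ c) (hbc : b ≠ c)
    (ha : a < n) (hb : b < n) (hc : c < n)
    (A B C : ℝ) (g : ℕ → ℝ) :
    ∑ j ∈ Finset.range n,
        (if j = a then A else if j = b then B else if j = c then C else 0) * g j
      = A * g a + B * g b + C * g c := by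
  have hcong : ∀ j ∈ Finset.range n,
      (if j = a then A else if j = b then B else if j = c then C else 0) * g j
        = (if j = a then A * g a else 0) + (if j = b then B * g b else 0)
          + (if j = c then C * g c else 0) := by
    intro j _
    rcases eq_or_ne j a with rfl | h1
    · rw [if_pos rfl, if_pos rfl, if_neg hab, if_neg hac]; ring
    · rw [if_neg h1, if_neg h1]
      rcases eq_or_ne j b with rfl | h2
      · rw [if_pos rfl, if_pos rfl, if_neg hbc]; ring
      · rw [if_neg h2, if_neg h2]
        rcases eq_or_ne j c with rfl | h3
        · rw [if_pos rfl, if_pos rfl]; ring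
        · rw [if_neg h3, if_neg h3]; ring
  rw [Finset.sum_congr rfl hcong, Finset.sum_add_distrib, Finset.sum_add_distrib,
    Finset.sum_ite_eq' (Finset.range n) a (fun _ => A * g a),
    Finset.sum_ite_eq' (Finset.range n) b (fun _ => B * g b),
    Finset.sum_ite_eq' (Finset.range n) c (fun _ => C * g c)]
  simp [Finset.mem_range.mpr ha, Finset.mem_range.mpr hb, Finset.mem_range.mpr hc]

set_option maxHeartbeats 1000000 in
theorem stmt_16 (N : ℕ) (hN : 1 ≤ N) (h βa βb εa εb : ℝ)
    (hh : 0 < h) (hβa : 0 < βa) (hβb : 0 < βb) (hεa : 0 < εa) (hεb : 0 < εb)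
    -- `ε j` stands for `ε_{j+1/2}` for `j = 0, 1, ..., N`
    (ε : ℕ → ℝ) (hε : ∀ j ≤ N, 0 < ε j)
    (M : Matrix (Fin (N + 2)) (Fin (N + 2)) ℝ)
    (hM : ∀ i j : Fin (N + 2), M i j =
      if (i : ℕ) = 0 then
        (if (j : ℕ) = 0 then h + 2 * βa * εa
         else if (j : ℕ) = 1 then h - 2 * βa * εa else 0)
      else if (i : ℕ) = N + 1 then
        (if (j : ℕ) = N then h - 2 * βb * εb
         else if (j : ℕ) = N + 1 then h + 2 * βb * εb else 0)
      else
        (if (j : ℕ) = (i : ℕ) - 1 then -ε ((i : ℕ) - 1)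
         else if (j : ℕ) = (i : ℕ) then ε ((i : ℕ) - 1) + ε (i : ℕ)
         else if (j : ℕ) = (i : ℕ) + 1 then -ε (i : ℕ) else 0)) :
    IsUnit M := by
  rw [Matrix.isUnit_iff_isUnit_det, isUnit_iff_ne_zero]
  intro hdet
  obtain ⟨v, hv0, hv⟩ := (Matrix.exists_mulVec_eq_zero_iff).mpr hdet
  apply hv0
  set y : ℕ → ℝ := fun j => if hj : j < N + 2 then v ⟨j, hj⟩ else 0 with hy
  have hyv : ∀ j : Fin (N + 2), y (j : ℕ) = v j := by
    intro j; simp only [hy]; rw [dif_pos j.isLt]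
  have hsum : ∀ i : Fin (N + 2), ∑ j : Fin (N + 2), M i j * v j = 0 := by
    intro i
    have := congrFun hv i
    simpa [Matrix.mulVec, dotProduct] using this
  -- Row 0
  have hr0 : (h + 2*βa*εa) * y 0 + (h - 2*βa*εa) * y 1 = 0 := by
    have h0 := hsum ⟨0, by omega⟩
    have conv0 : ∑ j ∈ Finset.range (N+2),
        (if j = 0 then h + 2*βa*εa else if j = 1 then h - 2*βa*εa else 0) * y j
        = ∑ j : Fin (N+2), M ⟨0, by omega⟩ j * v j := by
      rw [← Fin.sum_univ_eq_sum_range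
        (fun j => (if j = 0 then h + 2*βa*εa else if j = 1 then h - 2*βa*εa else 0) * y j)
        (N+2)]
      refine Finset.sum_congr rfl fun j _ => ?_
      rw [hM, ← hyv j]
      simp only [Fin.val_mk]
      norm_num
    have key := conv0.trans h0
    rw [sum2' (N+2) 0 1 (by omega) (by omega) (by omega)] at key
    linarith [key]
  -- Row N+1
  have hrN : (h - 2*βb*εb) * y N + (h + 2*βb*εb) * y (N+1) = 0 := by
    have h0 := hsum ⟨N+1, by omega⟩
    have conv0 : ∑ j ∈ Finset.range (N+2),
        (if j = N then h - 2*βb*εb else if j = N+1 then h + 2*βb*εb else 0) * y j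
        = ∑ j : Fin (N+2), M ⟨N+1, by omega⟩ j * v j := by
      rw [← Fin.sum_univ_eq_sum_range
        (fun j => (if j = N then h - 2*βb*εb else if j = N+1 then h + 2*βb*εb else 0) * y j)
        (N+2)]
      refine Finset.sum_congr rfl fun j _ => ?_
      rw [hM, ← hyv j]
      simp only [Fin.val_mk]
      norm_num
    have key := conv0.trans h0
    rw [sum2' (N+2) N (N+1) (by omega) (by omega) (by omega)] at key
    linarith [key]
  -- Interior rows
  have hrI : ∀ k, 1 ≤ k → k ≤ N →
      (ε (k-1) + ε k) * y k = ε (k-1) * y (k-1) + ε k * y (k+1) := by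
    intro k hk1 hkN
    have h0 := hsum ⟨k, by omega⟩
    have conv0 : ∑ j ∈ Finset.range (N+2),
        (if j = k-1 then -ε (k-1) else if j = k then ε (k-1) + ε k
          else if j = k+1 then -ε k else 0) * y j
        = ∑ j : Fin (N+2), M ⟨k, by omega⟩ j * v j := by
      rw [← Fin.sum_univ_eq_sum_range
        (fun j => (if j = k-1 then -ε (k-1) else if j = k then ε (k-1) + ε k
          else if j = k+1 then -ε k else 0) * y j) (N+2)]
      refine Finset.sum_congr rfl fun j _ => ?_
      rw [hM, ← hyv j]
      simp only [Fin.val_mk]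
      rw [if_neg (show ¬(k = 0) by omega), if_neg (show ¬(k = N + 1) by omega)]
    have key := conv0.trans h0
    rw [sum3' (N+2) (k-1) k (k+1) (by omega) (by omega) (by omega)
      (by omega) (by omega) (by omega)] at key
    linarith [key]
  -- maximum
  obtain ⟨i0, -, hi0⟩ := Finset.exists_max_image Finset.univ (fun i => |v i|)
    ⟨0, Finset.mem_univ 0⟩
  set m := |v i0| with hm
  have hm0 : 0 ≤ m := abs_nonneg _
  have hall : ∀ j, |y j| ≤ m := by
    intro j
    by_cases hj : j < N + 2
    · have : y j = v ⟨j, hj⟩ := by simp only [hy]; rw [dif_pos hj]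
      rw [this]
      exact hi0 ⟨j, hj⟩ (Finset.mem_univ _)
    · have : y j = 0 := by simp only [hy]; rw [dif_neg hj]
      rw [this]; simpa using hm0
  have habsA : |h - 2*βa*εa| < h + 2*βa*εa :=
    abs_lt.mpr ⟨by nlinarith [mul_pos hβa hεa], by nlinarith [mul_pos hβa hεa]⟩
  have habsB : |h - 2*βb*εb| < h + 2*βb*εb :=
    abs_lt.mpr ⟨by nlinarith [mul_pos hβb hεb], by nlinarith [mul_pos hβb hεb]⟩
  have keyA : |y 0| = m → 0 < m → False := by
    intro h0 hmpos
    have e : (h + 2*βa*εa) * y 0 = -((h - 2*βa*εa) * y 1) := by linarith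
    have e2 := congrArg abs e
    rw [abs_neg, abs_mul, abs_mul, abs_of_pos (show (0:ℝ) < h + 2*βa*εa by
      nlinarith [mul_pos hβa hεa]), h0] at e2
    have h1 : |y 1| ≤ m := hall 1
    nlinarith [abs_nonneg (h - 2*βa*εa), abs_nonneg (y 1),
      mul_le_mul_of_nonneg_left h1 (abs_nonneg (h - 2*βa*εa)),
      mul_lt_mul_of_pos_right habsA hmpos]
  have keyB : |y (N+1)| = m → 0 < m → False := by
    intro h0 hmpos
    have e : (h + 2*βb*εb) * y (N+1) = -((h - 2*βb*εb) * y N) := by linarith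
    have e2 := congrArg abs e
    rw [abs_neg, abs_mul, abs_mul, abs_of_pos (show (0:ℝ) < h + 2*βb*εb by
      nlinarith [mul_pos hβb hεb]), h0] at e2
    have h1 : |y N| ≤ m := hall N
    nlinarith [abs_nonneg (h - 2*βb*εb), abs_nonneg (y N),
      mul_le_mul_of_nonneg_left h1 (abs_nonneg (h - 2*βb*εb)),
      mul_lt_mul_of_pos_right habsB hmpos]
  have step : ∀ k, 1 ≤ k → k ≤ N → |y k| = m → |y (k-1)| = m := by
    intro k hk1 hkN hkm
    have e2 := hrI k hk1 hkN
    have hε1 : 0 < ε (k-1) := hε _ (by omega)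
    have hε2 : 0 < ε k := hε _ hkN
    have habs : (ε (k-1) + ε k) * m ≤ ε (k-1) * |y (k-1)| + ε k * |y (k+1)| := by
      calc (ε (k-1) + ε k) * m = |(ε (k-1) + ε k) * y k| := by
            rw [abs_mul, abs_of_pos (by linarith), hkm]
        _ = |ε (k-1) * y (k-1) + ε k * y (k+1)| := by rw [e2]
        _ ≤ |ε (k-1) * y (k-1)| + |ε k * y (k+1)| := abs_add_le _ _
        _ = ε (k-1) * |y (k-1)| + ε k * |y (k+1)| := by
            rw [abs_mul, abs_mul, abs_of_pos hε1, abs_of_pos hε2]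
    have h2 : |y (k+1)| ≤ m := hall (k+1)
    have h3 : ε (k-1) * m ≤ ε (k-1) * |y (k-1)| := by nlinarith
    have h4 : m ≤ |y (k-1)| := le_of_mul_le_mul_left h3 hε1
    exact le_antisymm (hall (k-1)) h4
  have hmz : m = 0 := by
    by_contra hne
    have hmpos : 0 < m := lt_of_le_of_ne hm0 (Ne.symm hne)
    have hvi0 : |y (i0 : ℕ)| = m := by rw [hyv i0]
    rcases Nat.lt_or_ge (i0 : ℕ) 1 with hc | hc
    · have h00 : (i0 : ℕ) = 0 := by omega
      rw [h00] at hvi0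
      exact keyA hvi0 hmpos
    rcases Nat.lt_or_ge (i0 : ℕ) (N+1) with hc2 | hc2
    · have down : ∀ d, d ≤ (i0 : ℕ) - 1 → |y ((i0 : ℕ) - d)| = m := by
        intro d
        induction d with
        | zero => intro _; simpa using hvi0
        | succ d ih =>
          intro hd
          have prev := ih (by omega)
          have hstep := step ((i0 : ℕ) - d) (by omega) (by omega) prev
          have heq : (i0 : ℕ) - (d+1) = (i0 : ℕ) - d - 1 := by omega
          rw [heq]; exact hstep
      have h1m : |y 1| = m := by
        have := down ((i0 : ℕ) - 1) le_rfl
        rwa [show (i0 : ℕ) - ((i0 : ℕ) - 1) = 1 from by omega] at this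
      have h0m : |y 0| = m := by
        have := step 1 le_rfl hN h1m
        simpa using this
      exact keyA h0m hmpos
    · have h00 : (i0 : ℕ) = N + 1 := by omega
      rw [h00] at hvi0
      exact keyB hvi0 hmpos
  funext i
  have h1 := hi0 i (Finset.mem_univ i)
  have h2 : |v i| ≤ 0 := by rw [← hmz]; exact h1
  have h3 : v i = 0 := abs_eq_zero.mp (le_antisymm h2 (abs_nonneg _))
  simpa using h3
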